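/- If M is a popular matching in G and ρ is an alternating path or cycle in the symmetric difference M ⊕ M' for some matching M', then the number of vertices on ρ that prefer M' to M is at most the number of vertices on ρ that prefer M to M' (otherwise M ⊕ ρ would be more popular than M). -/

import Mathlib

open Classical

/-- A bipartite graph `G = (A ∪ B, E)` with strict preference lists:
`adj` is the edge relation, and each vertex ranks its neighbors by a rank
function (lower rank = more preferred), injective on neighbors. -/
structure PrefSys (A B : Type) where
  adj : A → B → Prop
  rankA : A → B → ℕ
  rankB : B → A → ℕ
  rankA_inj : ∀ a b b', adj a b → adj a b' → rankA a b = rankA a b' → b = b'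
  rankB_inj : ∀ b a a', adj a b → adj a' b → rankB b a = rankB b a' → a = a'

namespace PrefSys

variable {A B : Type} (P : PrefSys A B)

/-- `M` is a matching of `G`: a set of edges, no two sharing a vertex. -/
def IsMatching (M : Finset (A × B)) : Prop :=
  (∀ p ∈ M, P.adj p.1 p.2) ∧
  (∀ p ∈ M, ∀ q ∈ M, p.1 = q.1 → p = q) ∧
  (∀ p ∈ M, ∀ q ∈ M, p.2 = q.2 → p = q)

/-- Vertex `a ∈ A` prefers matching `M` to matching `M'`:
`a` is matched in `M` and either unmatched in `M'` or matched to a strictly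
worse partner in `M'`. -/
def prefA (M M' : Finset (A × B)) (a : A) : Prop :=
  ∃ b, (a, b) ∈ M ∧ ∀ b', (a, b') ∈ M' → P.rankA a b < P.rankA a b'

/-- Vertex `b ∈ B` prefers matching `M` to matching `M'`. -/
def prefB (M M' : Finset (A × B)) (b : B) : Prop :=
  ∃ a, (a, b) ∈ M ∧ ∀ a', (a', b) ∈ M' → P.rankB b a < P.rankB b a'

/-- `φ(M, M')`: the number of vertices preferring `M` to `M'`. -/
noncomputable def phi (M M' : Finset (A × B)) : ℕ :=
  Nat.card {a : A // P.prefA M M' a} + Nat.card {b : B // P.prefB M M' b}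

/-- A matching is popular if it never loses a head-to-head election. -/
def Popular (M : Finset (A × B)) : Prop :=
  P.IsMatching M ∧ ∀ M', P.IsMatching M' → P.phi M' M ≤ P.phi M M'

/-- `a`'s vote on the edge `(a,b)` versus its `M`-partner is `+`. -/
def voteAplus (M : Finset (A × B)) (a : A) (b : B) : Prop :=
  ∀ b', (a, b') ∈ M → P.rankA a b < P.rankA a b'

/-- `b`'s vote on the edge `(a,b)` versus its `M`-partner is `+`. -/
def voteBplus (M : Finset (A × B)) (a : A) (b : B) : Prop :=
  ∀ a', (a', b) ∈ M → P.rankB b a < P.rankB b a'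

/-- `(a,b)` is a blocking edge (an edge outside `M` labeled `(+,+)`). -/
def Blocking (M : Finset (A × B)) (a : A) (b : B) : Prop :=
  P.adj a b ∧ (a, b) ∉ M ∧ P.voteAplus M a b ∧ P.voteBplus M a b

/-- A stable matching: a matching with no blocking edge. -/
def Stable (M : Finset (A × B)) : Prop :=
  P.IsMatching M ∧ ∀ a b, ¬ P.Blocking M a b

/-- A dominant matching: popular, and more popular than every larger matching. -/
def Dominant (M : Finset (A × B)) : Prop :=
  P.Popular M ∧ ∀ M', P.IsMatching M' → M.card < M'.card → P.phi M' M < P.phi M M'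

/-- The edge `(a,b)` survives in the subgraph `G_M` (i.e. it is an edge of `G`
that is in `M` or is not labeled `(-,-)`). -/
def inGM (M : Finset (A × B)) (a : A) (b : B) : Prop :=
  P.adj a b ∧ ((a, b) ∈ M ∨ P.voteAplus M a b ∨ P.voteBplus M a b)

end PrefSys

namespace PrefSys

variable {A B : Type} (P : PrefSys A B)

/-- Vertices of `G`, as a sum type. -/
abbrev V (A B : Type) := Sum A B

/-- Adjacency in the subgraph `G_M` (symmetrized). -/
def vAdjGM (M : Finset (A × B)) : V A B → V A B → Prop
  | .inl a, .inr b => P.inGM M a b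
  | .inr b, .inl a => P.inGM M a b
  | _, _ => False

/-- The (unordered) pair `{x,y}` is an edge of the matching `M`. -/
def vInM (M : Finset (A × B)) : V A B → V A B → Prop
  | .inl a, .inr b => (a, b) ∈ M
  | .inr b, .inl a => (a, b) ∈ M
  | _, _ => False

/-- The (unordered) pair `{x,y}` is an edge labeled `(+,+)` wrt `M`. -/
def vPlusPlus (M : Finset (A × B)) : V A B → V A B → Prop
  | .inl a, .inr b => P.Blocking M a b
  | .inr b, .inl a => P.Blocking M a b
  | _, _ => False

/-- The vertex `x` is matched in `M`. -/
def vMatched (M : Finset (A × B)) : V A B → Prop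
  | .inl a => ∃ b, (a, b) ∈ M
  | .inr b => ∃ a, (a, b) ∈ M

/-- The list of consecutive pairs of a vertex list. -/
def edgesOf (v : List (V A B)) : List (V A B × V A B) := v.zip v.tail

/-- An alternating path with respect to `M` in the subgraph `G_M`:
a list of distinct vertices, consecutive ones adjacent in `G_M`, whose edges
alternate between matching and non-matching edges. -/
def IsAltPath (M : Finset (A × B)) (v : List (V A B)) : Prop :=
  v.Nodup ∧ v.Chain' (P.vAdjGM M) ∧
  (edgesOf v).Chain' (fun e f => vInM M e.1 e.2 ↔ ¬ vInM M f.1 f.2)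

/-- An augmenting path with respect to `M` in `G_M`: an alternating path with
at least one edge, both of whose endpoints are unmatched in `M`. -/
def IsAugPath (M : Finset (A × B)) (v : List (V A B)) : Prop :=
  P.IsAltPath M v ∧ 2 ≤ v.length ∧
  (∀ x, v.head? = some x → ¬ vMatched M x) ∧
  (∀ x, v.getLast? = some x → ¬ vMatched M x)

/-- The edges of a cycle given by a vertex list (consecutive pairs plus the
closing edge from the last vertex to the first). -/
def cycEdgesOf (v : List (V A B)) : List (V A B × V A B) :=
  match v.head?, v.getLast? with
  | some x, some y => edgesOf v ++ [(y, x)]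
  | _, _ => []

/-- An alternating cycle with respect to `M` in the subgraph `G_M`. -/
def IsAltCycle (M : Finset (A × B)) (v : List (V A B)) : Prop :=
  v.Nodup ∧ 4 ≤ v.length ∧
  (∀ e ∈ cycEdgesOf v, P.vAdjGM M e.1 e.2) ∧
  (cycEdgesOf v).Chain' (fun e f => vInM M e.1 e.2 ↔ ¬ vInM M f.1 f.2)

/-- The set of `G`-edges (as pairs in `A × B`) used by a list of vertex pairs. -/
noncomputable def edgeFinset (l : List (V A B × V A B)) : Finset (A × B) :=
  (l.filterMap (fun e => match e with
    | (.inl a, .inr b) => some (a, b)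
    | (.inr b, .inl a) => some (a, b)
    | _ => none)).toFinset

/-- `M ⊕ ρ`: switch `M` along the path with vertex list `v`. -/
noncomputable def augment (M : Finset (A × B)) (v : List (V A B)) : Finset (A × B) :=
  symmDiff M (edgeFinset (edgesOf v))

end PrefSys

namespace PrefSys

variable {A B : Type} (P : PrefSys A B)

/-- The vertex `x` prefers matching `M` to matching `M'`. -/
def vPref (M M' : Finset (A × B)) : V A B → Prop
  | .inl a => P.prefA M M' a
  | .inr b => P.prefB M M' b

/-- `v` is (the vertex list of) an alternating path component of the edge set
`D` (say `D = M ⊕ M'`): consecutive vertices are joined by edges of `D`, and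
the two endpoints have no further `D`-edge. -/
def IsCompPath (D : Finset (A × B)) (v : List (V A B)) : Prop :=
  v.Nodup ∧ 2 ≤ v.length ∧ v.Chain' (vInM D) ∧
  (∀ x y, v.head? = some x → vInM D x y → v[1]? = some y) ∧
  (∀ x y, v.getLast? = some x → vInM D x y → v.reverse[1]? = some y)

/-- `v` is (the vertex list of) an alternating cycle of the edge set `D`. -/
def IsCompCycle (D : Finset (A × B)) (v : List (V A B)) : Prop :=
  v.Nodup ∧ 4 ≤ v.length ∧ v.Chain' (vInM D) ∧
  (∀ x y, v.getLast? = some x → v.head? = some y → vInM D x y)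

end PrefSys

/-!
In `M ⊕ M'` every vertex has at most one `M`-edge and one `M'`-edge, so a path or cycle
component `ρ` is closed under `M ⊕ M'`-edges; it is also closed under edges of `M ∩ M'`, since
such an edge isolates its endpoints in `M ⊕ M'`. Hence taking the `M'`-edges on the vertices of
`ρ` and the `M`-edges elsewhere yields a matching `M ⊕ ρ`. Off `ρ` every vertex keeps its
partner, and on `ρ` it gets its `M'`-partner, so `φ(M ⊕ ρ, M)` and `φ(M, M ⊕ ρ)` count exactly
the vertices of `ρ` preferring `M'`, resp. `M`; popularity of `M` compares them.
-/

namespace List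

variable {α : Type*} {R : α → α → Prop} {l : List α}

theorem IsChain.exists_rel_of_mem (hsymm : ∀ ⦃a b⦄, R a b → R b a) (hc : l.IsChain R)
    (hlen : 2 ≤ l.length) {x : α} (hx : x ∈ l) : ∃ z, R x z := by
  obtain ⟨i, hi, rfl⟩ := List.getElem_of_mem hx
  by_cases h : i + 1 < l.length
  · exact ⟨_, hc.getElem i h⟩
  · refine ⟨l[i - 1], hsymm ?_⟩
    simpa [show i - 1 + 1 = i by omega] using hc.getElem (i - 1) (by omega)

theorem mem_of_rel_of_two_neighbors
    (hdeg : ∀ ⦃x y z₁ z₂⦄, z₁ ≠ z₂ → R x z₁ → R x z₂ → R x y → y = z₁ ∨ y = z₂)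
    {x y z₁ z₂ : α} (h₁ : z₁ ∈ l) (h₂ : z₂ ∈ l) (hne : z₁ ≠ z₂)
    (hx₁ : R x z₁) (hx₂ : R x z₂) (hy : R x y) : y ∈ l :=
  (hdeg hne hx₁ hx₂ hy).elim (· ▸ h₁) (· ▸ h₂)

theorem IsChain.mem_of_rel_getElem
    (hdeg : ∀ ⦃x y z₁ z₂⦄, z₁ ≠ z₂ → R x z₁ → R x z₂ → R x y → y = z₁ ∨ y = z₂)
    (hsymm : ∀ ⦃a b⦄, R a b → R b a) (hnd : l.Nodup) (hc : l.IsChain R)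
    {i : ℕ} (hi₀ : 0 < i) (hi : i + 1 < l.length) {y : α} (hy : R l[i] y) : y ∈ l := by
  have hprev := hc.getElem (i - 1) (by omega)
  simp only [show i - 1 + 1 = i by omega] at hprev
  refine mem_of_rel_of_two_neighbors hdeg (getElem_mem (n := i + 1) hi)
    (getElem_mem (n := i - 1) (by omega)) ?_ (hc.getElem i hi) (hsymm hprev) hy
  rw [Ne, hnd.getElem_inj_iff]
  omega

theorem IsChain.mem_of_rel_of_ends
    (hdeg : ∀ ⦃x y z₁ z₂⦄, z₁ ≠ z₂ → R x z₁ → R x z₂ → R x y → y = z₁ ∨ y = z₂)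
    (hsymm : ∀ ⦃a b⦄, R a b → R b a) (hnd : l.Nodup) (hc : l.IsChain R)
    (hhead : ∀ x y, l.head? = some x → R x y → l[1]? = some y)
    (hlast : ∀ x y, l.getLast? = some x → R x y → l.reverse[1]? = some y)
    {x y : α} (hx : x ∈ l) (hy : R x y) : y ∈ l := by
  obtain ⟨i, hi, rfl⟩ := getElem_of_mem hx
  rcases Nat.eq_zero_or_pos i with rfl | hi₀
  · exact mem_of_getElem? (hhead _ _ (by simp [head?_eq_getElem?]) hy)
  by_cases hil : i + 1 < l.length
  · exact hc.mem_of_rel_getElem hdeg hsymm hnd hi₀ hil hy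
  · obtain rfl : i = l.length - 1 := by omega
    exact mem_reverse.mp (mem_of_getElem? (hlast _ _ (by simp [getLast?_eq_getElem?]) hy))

theorem IsChain.mem_of_rel_of_cyclic
    (hdeg : ∀ ⦃x y z₁ z₂⦄, z₁ ≠ z₂ → R x z₁ → R x z₂ → R x y → y = z₁ ∨ y = z₂)
    (hsymm : ∀ ⦃a b⦄, R a b → R b a) (hnd : l.Nodup) (hlen : 3 ≤ l.length)
    (hc : l.IsChain R) (hclose : ∀ x y, l.getLast? = some x → l.head? = some y → R x y)
    {x y : α} (hx : x ∈ l) (hy : R x y) : y ∈ l := by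
  have hclose' : R l[l.length - 1] l[0] :=
    hclose _ _ (by simp [getLast?_eq_getElem?]) (by simp [head?_eq_getElem?])
  obtain ⟨i, hi, rfl⟩ := getElem_of_mem hx
  rcases Nat.eq_zero_or_pos i with rfl | hi₀
  · refine mem_of_rel_of_two_neighbors hdeg (getElem_mem (n := 1) (by omega))
      (getElem_mem (n := l.length - 1) (by omega)) ?_ (hc.getElem 0 (by omega))
      (hsymm hclose') hy
    rw [Ne, hnd.getElem_inj_iff]
    omega
  by_cases hil : i + 1 < l.length
  · exact hc.mem_of_rel_getElem hdeg hsymm hnd hi₀ hil hy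
  · obtain rfl : i = l.length - 1 := by omega
    have hprev := hc.getElem (l.length - 2) (by omega)
    simp only [show l.length - 2 + 1 = l.length - 1 by omega] at hprev
    refine mem_of_rel_of_two_neighbors hdeg (getElem_mem (n := 0) (by omega))
      (getElem_mem (n := l.length - 2) (by omega)) ?_ hclose' (hsymm hprev) hy
    rw [Ne, hnd.getElem_inj_iff]
    omega

end List

namespace PrefSys

variable {A B : Type} {P : PrefSys A B} {M M' N : Finset (A × B)} {S : Set (V A B)}

theorem vInM_symm {x y : V A B} (h : vInM N x y) : vInM N y x := by
  cases x <;> cases y <;> exact h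

theorem isMatching_of_vInM_unique (hadj : ∀ p ∈ N, P.adj p.1 p.2)
    (huniq : ∀ ⦃x y z : V A B⦄, vInM N x y → vInM N x z → y = z) : P.IsMatching N := by
  refine ⟨hadj, fun p hp q hq h => Prod.ext h ?_, fun p hp q hq h => Prod.ext ?_ h⟩
  · exact Sum.inr_injective (huniq (x := .inl p.1) (y := .inr p.2) hp (h ▸ hq))
  · exact Sum.inl_injective (huniq (x := .inr p.2) (y := .inl p.1) hp (h ▸ hq))

theorem vInM_symmDiff {x y : V A B} :
    vInM (symmDiff M M') x y ↔ vInM M x y ∧ ¬ vInM M' x y ∨ vInM M' x y ∧ ¬ vInM M x y := by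
  cases x <;> cases y <;> simp [vInM, Finset.mem_symmDiff]

theorem IsMatching.vInM_unique (hN : P.IsMatching N) {x y z : V A B}
    (hy : vInM N x y) (hz : vInM N x z) : y = z := by
  rcases x with a | b <;> rcases y with a' | b' <;> rcases z with a'' | b'' <;>
    simp only [vInM, Sum.inl.injEq, Sum.inr.injEq] at hy hz ⊢
  · exact congrArg Prod.snd (hN.2.1 _ hy _ hz rfl)
  · exact congrArg Prod.fst (hN.2.2 _ hy _ hz rfl)

theorem vInM_symmDiff_eq_or_eq (hM : P.IsMatching M) (hM' : P.IsMatching M')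
    ⦃x y z₁ z₂ : V A B⦄ (hne : z₁ ≠ z₂) (h₁ : vInM (symmDiff M M') x z₁)
    (h₂ : vInM (symmDiff M M') x z₂) (hy : vInM (symmDiff M M') x y) : y = z₁ ∨ y = z₂ := by
  rw [vInM_symmDiff] at h₁ h₂ hy
  rcases h₁ with ⟨h₁, -⟩ | ⟨h₁, -⟩ <;> rcases h₂ with ⟨h₂, -⟩ | ⟨h₂, -⟩ <;>
    rcases hy with ⟨hy, -⟩ | ⟨hy, -⟩ <;>
    first
      | exact absurd (hM.vInM_unique h₁ h₂) hne
      | exact absurd (hM'.vInM_unique h₁ h₂) hne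
      | exact .inl (hM.vInM_unique hy h₁)
      | exact .inl (hM'.vInM_unique hy h₁)
      | exact .inr (hM.vInM_unique hy h₂)
      | exact .inr (hM'.vInM_unique hy h₂)

theorem not_vInM_symmDiff_of_vInM_of_vInM (hM : P.IsMatching M) (hM' : P.IsMatching M')
    {x y z : V A B} (h : vInM M x y) (h' : vInM M' x y) : ¬ vInM (symmDiff M M') x z := by
  rw [vInM_symmDiff]
  rintro (⟨hz, hz'⟩ | ⟨hz', hz⟩)
  · exact hz' (hM.vInM_unique h hz ▸ h')
  · exact hz (hM'.vInM_unique h' hz' ▸ h)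

theorem mem_of_vInM_symmDiff (hM : P.IsMatching M) (hM' : P.IsMatching M') {v : List (V A B)}
    (hv : IsCompPath (symmDiff M M') v ∨ IsCompCycle (symmDiff M M') v)
    {x y : V A B} (hx : x ∈ v) (hy : vInM (symmDiff M M') x y) : y ∈ v := by
  have hdeg := vInM_symmDiff_eq_or_eq hM hM'
  rcases hv with ⟨hnd, -, hc, hhead, hlast⟩ | ⟨hnd, hlen, hc, hclose⟩
  · exact hc.mem_of_rel_of_ends hdeg (fun _ _ => vInM_symm) hnd hhead hlast hx hy
  · exact hc.mem_of_rel_of_cyclic hdeg (fun _ _ => vInM_symm) hnd (by omega) hclose hx hy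

theorem mem_of_vInM_of_isComp (hM : P.IsMatching M) (hM' : P.IsMatching M') {v : List (V A B)}
    (hv : IsCompPath (symmDiff M M') v ∨ IsCompCycle (symmDiff M M') v)
    {x y : V A B} (hx : x ∈ v) (hy : vInM M x y ∨ vInM M' x y) : y ∈ v := by
  by_cases hD : vInM (symmDiff M M') x y
  · exact mem_of_vInM_symmDiff hM hM' hv hx hD
  have hboth : vInM M x y ∧ vInM M' x y := by
    rw [vInM_symmDiff] at hD
    tauto
  have hc : v.IsChain (vInM (symmDiff M M')) := hv.elim (·.2.2.1) (·.2.2.1)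
  have hlen : 2 ≤ v.length := hv.elim (·.2.1) (fun h => by have := h.2.1; omega)
  obtain ⟨z, hz⟩ := hc.exists_rel_of_mem (fun _ _ => vInM_symm) hlen hx
  exact absurd hz (not_vInM_symmDiff_of_vInM_of_vInM hM hM' hboth.1 hboth.2)

theorem vPref_congr {N₁ N₁' N₂ N₂' : Finset (A × B)} {x : V A B}
    (h₁ : ∀ y, vInM N₁ x y ↔ vInM N₁' x y) (h₂ : ∀ y, vInM N₂ x y ↔ vInM N₂' x y) :
    P.vPref N₁ N₂ x ↔ P.vPref N₁' N₂' x := by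
  rcases x with a | b
  · simp only [vInM] at h₁ h₂
    simp only [vPref, prefA, fun b => h₁ (.inr b), fun b => h₂ (.inr b)]
  · simp only [vInM] at h₁ h₂
    simp only [vPref, prefB, fun a => h₁ (.inl a), fun a => h₂ (.inl a)]

theorem not_vPref_self (x : V A B) : ¬ P.vPref N N x := by
  rcases x with a | b <;> rintro ⟨_, h, hlt⟩ <;> exact lt_irrefl _ (hlt _ h)

theorem finite_prefA (N N' : Finset (A × B)) : {a | P.prefA N N' a}.Finite :=
  (N.image Prod.fst).finite_toSet.subset fun _ ⟨_, hb, _⟩ => Finset.mem_image_of_mem _ hb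

theorem finite_prefB (N N' : Finset (A × B)) : {b | P.prefB N N' b}.Finite :=
  (N.image Prod.snd).finite_toSet.subset fun _ ⟨_, ha, _⟩ => Finset.mem_image_of_mem _ ha

theorem phi_eq_card_vPref (N N' : Finset (A × B)) :
    P.phi N N' = Nat.card {x : V A B // P.vPref N N' x} := by
  have : Finite {a // P.vPref N N' (.inl a)} := (P.finite_prefA N N').to_subtype
  have : Finite {b // P.vPref N N' (.inr b)} := (P.finite_prefB N N').to_subtype
  rw [Nat.card_congr (Equiv.subtypeSum (p := P.vPref N N')), Nat.card_sum]
  rfl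

def EdgeClosed (N : Finset (A × B)) (S : Set (V A B)) : Prop :=
  ∀ ⦃x y⦄, vInM N x y → x ∈ S → y ∈ S

theorem EdgeClosed.inl_mem_iff (hS : EdgeClosed N S) {a : A} {b : B}
    (h : (a, b) ∈ N) : Sum.inl a ∈ S ↔ Sum.inr b ∈ S :=
  ⟨hS (x := .inl a) (y := .inr b) h, hS (x := .inr b) (y := .inl a) h⟩

/-- `M ⊕ ρ`, where `S` is the vertex set of a component `ρ` of `M ⊕ M'`. -/
noncomputable def switch (M M' : Finset (A × B)) (S : Set (V A B)) : Finset (A × B) :=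
  M.filter (fun p => Sum.inl p.1 ∉ S) ∪ M'.filter (fun p => Sum.inl p.1 ∈ S)

theorem vInM_switch_of_mem (hSM : EdgeClosed M S) (hSM' : EdgeClosed M' S) {x y : V A B}
    (hx : x ∈ S) : vInM (switch M M' S) x y ↔ vInM M' x y := by
  rcases x with a | b <;> rcases y with a' | b' <;>
    simp only [vInM, switch, Finset.mem_union, Finset.mem_filter, hx]
  · tauto
  · have hM := fun h => (hSM.inl_mem_iff (a := a') h).2 hx
    have hM' := fun h => (hSM'.inl_mem_iff (a := a') h).2 hx
    tauto

theorem vInM_switch_of_not_mem (hSM : EdgeClosed M S) (hSM' : EdgeClosed M' S) {x y : V A B}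
    (hx : x ∉ S) : vInM (switch M M' S) x y ↔ vInM M x y := by
  rcases x with a | b <;> rcases y with a' | b' <;>
    simp only [vInM, switch, Finset.mem_union, Finset.mem_filter, hx]
  · tauto
  · have hM := fun h => (hSM.inl_mem_iff (a := a') h).not.2 hx
    have hM' := fun h => (hSM'.inl_mem_iff (a := a') h).not.2 hx
    tauto

theorem isMatching_switch (hM : P.IsMatching M) (hM' : P.IsMatching M')
    (hSM : EdgeClosed M S) (hSM' : EdgeClosed M' S) : P.IsMatching (switch M M' S) := by
  refine isMatching_of_vInM_unique (fun p hp => ?_) (fun x y z hy hz => ?_)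
  · simp only [switch, Finset.mem_union, Finset.mem_filter] at hp
    exact hp.elim (hM.1 p ·.1) (hM'.1 p ·.1)
  · by_cases hx : x ∈ S
    · simp only [vInM_switch_of_mem hSM hSM' hx] at hy hz
      exact hM'.vInM_unique hy hz
    · simp only [vInM_switch_of_not_mem hSM hSM' hx] at hy hz
      exact hM.vInM_unique hy hz

theorem vPref_switch_left (hSM : EdgeClosed M S) (hSM' : EdgeClosed M' S) (x : V A B) :
    P.vPref (switch M M' S) M x ↔ x ∈ S ∧ P.vPref M' M x := by
  by_cases hx : x ∈ S
  · simpa [hx] using vPref_congr (fun _ => vInM_switch_of_mem hSM hSM' hx) (fun _ => Iff.rfl)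
  · simpa [hx] using (vPref_congr (fun _ => vInM_switch_of_not_mem hSM hSM' hx)
      (fun _ => Iff.rfl)).not.2 (not_vPref_self x)

theorem vPref_switch_right (hSM : EdgeClosed M S) (hSM' : EdgeClosed M' S) (x : V A B) :
    P.vPref M (switch M M' S) x ↔ x ∈ S ∧ P.vPref M M' x := by
  by_cases hx : x ∈ S
  · simpa [hx] using vPref_congr (fun _ => Iff.rfl) (fun _ => vInM_switch_of_mem hSM hSM' hx)
  · simpa [hx] using (vPref_congr (fun _ => Iff.rfl)
      (fun _ => vInM_switch_of_not_mem hSM hSM' hx)).not.2 (not_vPref_self x)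

theorem phi_switch_left (hSM : EdgeClosed M S) (hSM' : EdgeClosed M' S) :
    P.phi (switch M M' S) M = Nat.card {x : V A B // x ∈ S ∧ P.vPref M' M x} := by
  rw [phi_eq_card_vPref]
  exact Nat.card_congr (Equiv.subtypeEquivRight (vPref_switch_left hSM hSM'))

theorem phi_switch_right (hSM : EdgeClosed M S) (hSM' : EdgeClosed M' S) :
    P.phi M (switch M M' S) = Nat.card {x : V A B // x ∈ S ∧ P.vPref M M' x} := by
  rw [phi_eq_card_vPref]
  exact Nat.card_congr (Equiv.subtypeEquivRight (vPref_switch_right hSM hSM'))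

end PrefSys

open PrefSys in
theorem popular_path_cycle_votes_general {A B : Type}
    (P : PrefSys A B) (M M' : Finset (A × B)) (hM : P.Popular M)
    (hM' : P.IsMatching M') (v : List (V A B))
    (hv : IsCompPath (symmDiff M M') v ∨ IsCompCycle (symmDiff M M') v) :
    Nat.card {x : V A B // x ∈ v ∧ vPref P M' M x} ≤
      Nat.card {x : V A B // x ∈ v ∧ vPref P M M' x} := by
  set S : Set (V A B) := {x | x ∈ v}
  have hSM : EdgeClosed M S := fun _ _ hxy hx => mem_of_vInM_of_isComp hM.1 hM' hv hx (.inl hxy)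
  have hSM' : EdgeClosed M' S := fun _ _ hxy hx => mem_of_vInM_of_isComp hM.1 hM' hv hx (.inr hxy)
  calc Nat.card {x : V A B // x ∈ v ∧ vPref P M' M x}
      = P.phi (switch M M' S) M := (phi_switch_left hSM hSM').symm
    _ ≤ P.phi M (switch M M' S) := hM.2 _ (isMatching_switch hM.1 hM' hSM hSM')
    _ = Nat.card {x : V A B // x ∈ v ∧ vPref P M M' x} := phi_switch_right hSM hSM'

open PrefSys in
/-- if `M` is popular and `ρ` is an alternating path or cycle of
`M ⊕ M'` for some matching `M'`, then on the vertices of `ρ`, the number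
preferring `M'` to `M` is at most the number preferring `M` to `M'`
(otherwise `M ⊕ ρ` would be more popular than `M`). -/
theorem popular_path_cycle_votes {A B : Type} [Fintype A] [Fintype B]
    (P : PrefSys A B) (M M' : Finset (A × B)) (hM : P.Popular M)
    (hM' : P.IsMatching M') (v : List (V A B))
    (hv : IsCompPath (symmDiff M M') v ∨ IsCompCycle (symmDiff M M') v) :
    Nat.card {x : V A B // x ∈ v ∧ vPref P M' M x} ≤
      Nat.card {x : V A B // x ∈ v ∧ vPref P M M' x} :=
  popular_path_cycle_votes_general P M M' hM hM' v hv
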